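/- Let n ≥ 1 and let A ∈ ℂ^{n×n} be upper bidiagonal, i.e., A_{ij} = 0 unless j = i or j = i + 1. If all the superdiagonal entries A_{i,i+1} (i = 1,…,n−1) are nonzero, then for every λ ∈ ℂ that is not an eigenvalue of A, the n eigenvalues of the Hermitian matrix (λI − A)ᴴ(λI − A) are pairwise distinct; i.e., all singular values of λI − A are simple. -/

import Mathlib

/-! Since `λ` is not a diagonal entry of `A`, the upper bidiagonal matrix `B = λI - A` has nonzero
diagonal and superdiagonal, so `BᴴB` is tridiagonal with nonzero superdiagonal entries
`conj (B i i) * B i (i+1)`. Solving `BᴴB v = μ v` row by row then determines `v` from `v 0`, so every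
eigenspace is a line; for a Hermitian matrix, with its orthonormal eigenbasis, this forces the
eigenvalues to be distinct. -/

open Matrix

/-- The eigenvalues (squares of the singular values) of `λI - A`, i.e. the eigenvalues
of the Hermitian matrix `(λI - A)ᴴ (λI - A)`, counted with multiplicity. -/
noncomputable def sqSingVals {n : ℕ} (A : Matrix (Fin n) (Fin n) ℂ) (lam : ℂ) :
    Fin n → ℝ :=
  (Matrix.isHermitian_conjTranspose_mul_self
    (lam • (1 : Matrix (Fin n) (Fin n) ℂ) - A)).eigenvalues

namespace Matrix

variable {R : Type*} {n : ℕ}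

def IsUpperBidiagonal [Zero R] (B : Matrix (Fin n) (Fin n) R) : Prop :=
  ∀ i j : Fin n, ¬(j = i ∨ (j : ℕ) = (i : ℕ) + 1) → B i j = 0

namespace IsUpperBidiagonal

theorem isUpperTriangular [Zero R] {B : Matrix (Fin n) (Fin n) R} (hB : B.IsUpperBidiagonal) :
    B.IsUpperTriangular := fun i j hji =>
  hB i j fun h => by
    have : (j : ℕ) < i := hji
    rcases h with rfl | h <;> omega

theorem smul_one_sub [Ring R] {A : Matrix (Fin n) (Fin n) R} (hA : A.IsUpperBidiagonal) (r : R) :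
    (r • 1 - A).IsUpperBidiagonal := fun i j hij => by
  rw [sub_apply, hA i j hij, smul_apply, one_apply_ne fun h => hij (.inl h.symm)]
  simp

variable [Semiring R] [StarRing R] {B : Matrix (Fin n) (Fin n) R}

theorem conjTranspose_mul_self_apply_of_succ_lt (hB : B.IsUpperBidiagonal) {i j : Fin n}
    (hij : (i : ℕ) + 1 < j) : (Bᴴ * B) i j = 0 := by
  refine (mul_apply ..).trans (Finset.sum_eq_zero fun l _ => ?_)
  rw [conjTranspose_apply]
  by_cases hli : i = l ∨ (i : ℕ) = l + 1
  · rw [hB l j (by omega), mul_zero]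
  · rw [hB l i hli, star_zero, zero_mul]

theorem conjTranspose_mul_self_apply_of_eq_succ (hB : B.IsUpperBidiagonal) {i j : Fin n}
    (hij : (j : ℕ) = i + 1) : (Bᴴ * B) i j = star (B i i) * B i j := by
  rw [mul_apply, Finset.sum_eq_single i, conjTranspose_apply]
  · intro l _ hli
    rw [conjTranspose_apply]
    by_cases hil : (i : ℕ) = l + 1
    · rw [hB l j (by omega), mul_zero]
    · rw [hB l i (by omega), star_zero, zero_mul]
  · simp

end IsUpperBidiagonal

theorem IsUpperTriangular.diag_ne_zero_of_isUnit [CommRing R] [Nontrivial R] {ι : Type*}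
    [Fintype ι] [DecidableEq ι] [LinearOrder ι] {M : Matrix ι ι R} (hM : M.IsUpperTriangular)
    (hunit : IsUnit M) (i : ι) : M i i ≠ 0 := fun hi =>
  ((isUnit_iff_isUnit_det M).mp hunit).ne_zero <| by
    rw [det_of_isUpperTriangular hM]; exact Finset.prod_eq_zero (Finset.mem_univ i) hi

theorem eq_zero_of_mulVec_eq_smul_of_superdiag_ne_zero [Semiring R] [NoZeroDivisors R]
    (hn : 0 < n) {N : Matrix (Fin n) (Fin n) R}
    (hzero : ∀ i j : Fin n, (i : ℕ) + 1 < j → N i j = 0)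
    (hsup : ∀ i j : Fin n, (j : ℕ) = i + 1 → N i j ≠ 0)
    {μ : R} {v : Fin n → R} (hv : N *ᵥ v = μ • v) (h0 : v ⟨0, hn⟩ = 0) : v = 0 := by
  suffices h : ∀ k : ℕ, ∀ i : Fin n, (i : ℕ) ≤ k → v i = 0 from
    funext fun i => h i i le_rfl
  intro k
  induction k with
  | zero => exact fun i hi => (Fin.ext (Nat.le_zero.mp hi) : i = ⟨0, hn⟩) ▸ h0
  | succ k ih =>
    intro i hi
    rcases Nat.lt_or_eq_of_le hi with hlt | hik
    · exact ih i (Nat.lt_succ_iff.mp hlt)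
    let m : Fin n := ⟨k, by omega⟩
    have row : ∑ j, N m j * v j = μ * v m := congrFun hv m
    rw [ih m le_rfl, mul_zero, Finset.sum_eq_single i] at row
    · exact (mul_eq_zero.mp row).resolve_left (hsup m i hik)
    · intro j _ hji
      rcases le_or_gt (j : ℕ) k with hjk | hjk
      · rw [ih j hjk, mul_zero]
      · rw [hzero m j (by simp only [m]; omega), zero_mul]
    · simp

theorem IsHermitian.eigenvalues_injective_of_eigenvector_eq_zero {𝕜 ι : Type*} [RCLike 𝕜]
    [Fintype ι] [DecidableEq ι] {H : Matrix ι ι 𝕜} (hH : H.IsHermitian) (i₀ : ι)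
    (h : ∀ (μ : 𝕜) (v : ι → 𝕜), H *ᵥ v = μ • v → v i₀ = 0 → v = 0) :
    Function.Injective hH.eigenvalues := by
  intro i j hij
  by_contra hne
  set e := hH.eigenvectorBasis
  set μ : 𝕜 := (hH.eigenvalues i : 𝕜)
  have heig : ∀ k, hH.eigenvalues k = hH.eigenvalues i → H *ᵥ ⇑(e k) = μ • ⇑(e k) := by
    intro k hk
    rw [hH.mulVec_eigenvectorBasis, hk, RCLike.real_smul_eq_coe_smul (K := 𝕜)]
  have hj_eig := heig j hij.symm
  -- a combination of `e i` and `e j` vanishing at `i₀` is again an eigenvector, hence zero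
  have hcomb : e j i₀ • e i + (-e i i₀) • e j = 0 := by
    apply WithLp.ofLp_injective
    refine h μ _ ?_ ?_
    · simp only [WithLp.ofLp_add, WithLp.ofLp_smul, mulVec_add, mulVec_smul, heig i rfl, hj_eig]
      rw [smul_add, smul_comm μ, smul_comm μ]
    · simp only [WithLp.ofLp_add, WithLp.ofLp_smul, Pi.add_apply, Pi.smul_apply, smul_eq_mul]
      ring
  have hj₀ : e j i₀ = 0 :=
    ((LinearIndepOn.pair_iff e hne).mp (e.orthonormal.linearIndependent.linearIndepOn _) _ _ hcomb).1
  exact e.orthonormal.ne_zero j (WithLp.ofLp_injective _ (h μ _ hj_eig hj₀))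

end Matrix

/-- If `A` is upper bidiagonal with all superdiagonal entries nonzero, then for every
`λ` that is not an eigenvalue of `A`, all the singular values of `λI - A` are simple:
the `n` eigenvalues of `(λI - A)ᴴ (λI - A)` are pairwise distinct. -/
theorem bidiagonal_singular_values_simple
    {n : ℕ} (hn : 1 ≤ n) (A : Matrix (Fin n) (Fin n) ℂ)
    (hbd : ∀ i j : Fin n, ¬(j = i ∨ (j : ℕ) = (i : ℕ) + 1) → A i j = 0)
    (hsup : ∀ i j : Fin n, (j : ℕ) = (i : ℕ) + 1 → A i j ≠ 0) :
    ∀ lam : ℂ, lam ∉ spectrum ℂ A → Function.Injective (sqSingVals A lam) := by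
  intro lam hlam
  set B := lam • (1 : Matrix (Fin n) (Fin n) ℂ) - A
  have hB : B.IsUpperBidiagonal := IsUpperBidiagonal.smul_one_sub hbd lam
  have hB_diag : ∀ i, B i i ≠ 0 := hB.isUpperTriangular.diag_ne_zero_of_isUnit <| by
    simpa [Algebra.algebraMap_eq_smul_one] using spectrum.notMem_iff.mp hlam
  have hB_sup : ∀ i j : Fin n, (j : ℕ) = i + 1 → B i j ≠ 0 := fun i j hij => by
    simpa [B, one_apply_ne (by rintro rfl; omega : i ≠ j)] using hsup i j hij
  refine (isHermitian_conjTranspose_mul_self B).eigenvalues_injective_of_eigenvector_eq_zero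
    ⟨0, hn⟩ fun μ v hv h₀ => eq_zero_of_mulVec_eq_smul_of_superdiag_ne_zero hn
      (fun i j => hB.conjTranspose_mul_self_apply_of_succ_lt) (fun i j hij => ?_) hv h₀
  rw [hB.conjTranspose_mul_self_apply_of_eq_succ hij]
  exact mul_ne_zero (star_ne_zero.mpr (hB_diag i)) (hB_sup i j hij)
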